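/- Suppose the strict dominance condition |c(xβ, yβ, m)| > Σ_{(α₁,α₂) ≤ (bx,by), (α₁,α₂) ≠ (xβ,yβ)} |c(α₁, α₂, m)| holds. Fix a height z₀ ∈ ℕ, a right-hand side g : ℕ³ → ℂ, and prescribed values u(x,y,k) ∈ ℂ for all (x,y) with x ≤ Bx, y ≤ By and all k < m + z₀ (the values of the solution on the m + z₀ previous layers), together with prescribed boundary values v(x,y) ∈ ℂ for (x,y) ∈ {(x,y) : x ≤ Bx, y ≤ By} \ I (the values on the boundary strip of layer m + z₀). Then there exists exactly one function w : I → ℂ such that the function f on layers 0,…,m+z₀ defined by f(x,y,k) = u(x,y,k) for k < m + z₀, f(x,y,m+z₀) = v(x,y) for (x,y) ∉ I, and f(x,y,m+z₀) = w(x,y) for (x,y) ∈ I, satisfies Σ_{i ≤ bx, j ≤ by, k ≤ m} c(i,j,k) · f(x+i, y+j, z₀+k) = g(x,y,z₀) for all x ≤ Bx − bx, y ≤ By − by. (The layer-by-layer step of the algorithm determines the interior values of each new layer uniquely.) -/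

import Mathlib

/-!
On the new layer the difference equation at `(x, y)` reads
`∑ c(i, j, m) · f(x + i, y + j, m + z₀) = (known terms)`, the known terms coming from the
earlier layers and the boundary strip. Shifting the equation index by `β`, this is a square
linear system in the interior values whose matrix is the stencil `(c(·, ·, m))` centred at `β`.
Every row has diagonal entry `c(xβ, yβ, m)` and its off-diagonal entries are other coefficients
`c(α, m)`, each at most once, so the dominance hypothesis makes the matrix strictly diagonally
dominant, hence invertible (Gershgorin).
-/

open Finset Matrix Function

theorem Finset.sum_ite_coe_eq {ι M : Type*} [DecidableEq ι] [AddCommMonoid M] {S : Finset ι}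
    (t : ι) (f : S → M) :
    ∑ q : S, (if t = q then f q else 0) = if h : t ∈ S then f ⟨t, h⟩ else 0 := by
  split_ifs with h
  · simp [← Subtype.ext_iff (a1 := ⟨t, h⟩)]
  · exact Finset.sum_eq_zero fun q _ => if_neg fun e : t = q => h (e ▸ q.2)

section Stencil

variable {K ι κ : Type*} [NormedField K] [DecidableEq ι]

/-- The matrix of `w ↦ (q ↦ ∑ p ∈ P, a p * w (nb q p))` on functions `w : S → K` extended by
zero outside `S`. -/
def stencilMatrix (S : Finset ι) (P : Finset κ) (a : κ → K) (nb : ι → κ → ι) : Matrix S S K :=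
  of fun q q' => ∑ p ∈ P, if nb q p = q' then a p else 0

variable {S : Finset ι} {P : Finset κ} {a : κ → K} {nb : ι → κ → ι}

theorem stencilMatrix_mulVec (w : S → K) (q : S) :
    (stencilMatrix S P a nb *ᵥ w) q =
      ∑ p ∈ P, if h : nb q p ∈ S then a p * w ⟨nb q p, h⟩ else 0 := by
  simp only [stencilMatrix, mulVec, dotProduct, of_apply, sum_mul, ite_mul, zero_mul]
  rw [sum_comm]
  exact sum_congr rfl fun p _ => sum_ite_coe_eq _ _

theorem stencilMatrix_apply_self [DecidableEq κ] {β : κ} (hβ : β ∈ P) {q : S}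
    (hnb : ∀ p ∈ P, nb q p = q ↔ p = β) :
    stencilMatrix S P a nb q q = a β := by
  rw [stencilMatrix, of_apply, sum_congr rfl fun p hp => by rw [if_congr (hnb p hp) rfl rfl],
    sum_ite_eq' P β a, if_pos hβ]

theorem sum_norm_stencilMatrix_erase_le [DecidableEq κ] {β : κ} (hβ : β ∈ P) {q : S}
    (hnb : nb q β = q) :
    ∑ q' ∈ univ.erase q, ‖stencilMatrix S P a nb q q'‖ ≤ ∑ p ∈ P.erase β, ‖a p‖ := by
  calc ∑ q' ∈ univ.erase q, ‖stencilMatrix S P a nb q q'‖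
      ≤ ∑ q' ∈ univ.erase q, ∑ p ∈ P, if nb q p = q' then ‖a p‖ else 0 := by
        refine sum_le_sum fun q' _ => (norm_sum_le _ _).trans_eq (sum_congr rfl fun p _ => ?_)
        split_ifs <;> simp
    _ = ∑ p ∈ P, ∑ q' ∈ univ.erase q, if nb q p = q' then ‖a p‖ else 0 := sum_comm
    _ ≤ ∑ p ∈ P.erase β, ‖a p‖ := by
        rw [← add_sum_erase P _ hβ, hnb, sum_eq_zero fun q' hq' =>
          if_neg fun e => ne_of_mem_erase hq' (Subtype.ext e).symm, zero_add]
        refine sum_le_sum fun p _ => ?_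
        calc ∑ q' ∈ univ.erase q, (if nb q p = q' then ‖a p‖ else 0)
            ≤ ∑ q' : S, if nb q p = q' then ‖a p‖ else 0 :=
              sum_le_sum_of_subset_of_nonneg (erase_subset _ _) fun _ _ _ => by positivity
          _ ≤ ‖a p‖ := by rw [sum_ite_coe_eq]; split_ifs <;> simp

theorem stencilMatrix_mulVec_bijective [DecidableEq κ] {β : κ} (hβ : β ∈ P)
    (hnb : ∀ q ∈ S, ∀ p ∈ P, nb q p = q ↔ p = β) (hdom : ∑ p ∈ P.erase β, ‖a p‖ < ‖a β‖) :
    Bijective (stencilMatrix S P a nb).mulVec := by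
  have hdet : (stencilMatrix S P a nb).det ≠ 0 := det_ne_zero_of_sum_row_lt_diag fun q => by
    rw [stencilMatrix_apply_self hβ (hnb q q.2)]
    exact (sum_norm_stencilMatrix_erase_le hβ ((hnb q q.2 β hβ).2 rfl)).trans_lt hdom
  have hunit := (isUnit_iff_isUnit_det _).2 (isUnit_iff_ne_zero.2 hdet)
  exact ⟨mulVec_injective_iff_isUnit.2 hunit, mulVec_surjective_iff_isUnit.2 hunit⟩

end Stencil

theorem sum_range_succ_top_layer {R ι : Type*} [CommRing R] [DecidableEq ι] {S : Finset ι}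
    (c U : ℕ → R) (m z₀ : ℕ) (t : ι) (w : S → R) (V : R) :
    ∑ k ∈ range (m + 1),
        c k * (if z₀ + k < m + z₀ then U k else if h : t ∈ S then w ⟨t, h⟩ else V)
      = (if h : t ∈ S then c m * w ⟨t, h⟩ else 0)
        + (∑ k ∈ range m, c k * U k + if t ∈ S then 0 else c m * V) := by
  rw [sum_range_succ, sum_congr rfl fun k hk => by rw [if_pos (by rw [mem_range] at hk; omega)],
    if_neg (by omega)]
  split_ifs <;> ring

theorem forall_le_le_iff_forall_mem_Icc_prod {X Y a b : ℕ} {p : ℕ → ℕ → Prop} :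
    (∀ x y, x ≤ X → y ≤ Y → p x y) ↔
      ∀ q ∈ Icc a (X + a) ×ˢ Icc b (Y + b), p (q.1 - a) (q.2 - b) := by
  refine ⟨fun h q hq => ?_, fun h x y hx hy => ?_⟩
  · simp only [mem_product, mem_Icc] at hq
    exact h _ _ (by omega) (by omega)
  · simpa using h (x + a, y + b) (by simp only [mem_product, mem_Icc]; omega)

theorem layer_step_unique_general
    (Bx BY bx bY m : ℕ)
    (c : ℕ → ℕ → ℕ → ℂ)
    (xβ yβ : ℕ) (hxβ : xβ ≤ bx) (hyβ : yβ ≤ bY)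
    (hdom : ∑ p ∈ ((Finset.range (bx + 1)) ×ˢ (Finset.range (bY + 1))).erase (xβ, yβ),
        ‖c p.1 p.2 m‖ < ‖c xβ yβ m‖)
    (z₀ : ℕ) (g : ℕ → ℕ → ℕ → ℂ)
    (u : ℕ → ℕ → ℕ → ℂ) (v : ℕ → ℕ → ℂ) :
    ∃! w : (↥((Finset.Icc xβ (Bx - bx + xβ)) ×ˢ (Finset.Icc yβ (BY - bY + yβ)))) → ℂ,
      ∀ x y : ℕ, x ≤ Bx - bx → y ≤ BY - bY →
        ∑ i ∈ Finset.range (bx + 1), ∑ j ∈ Finset.range (bY + 1),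
          ∑ k ∈ Finset.range (m + 1),
            c i j k *
              (if z₀ + k < m + z₀ then u (x + i) (y + j) (z₀ + k)
               else if h : (x + i, y + j) ∈
                   (Finset.Icc xβ (Bx - bx + xβ)) ×ˢ (Finset.Icc yβ (BY - bY + yβ)) then
                 w ⟨(x + i, y + j), h⟩
               else v (x + i) (y + j)) = g x y z₀ := by
  set S := Icc xβ (Bx - bx + xβ) ×ˢ Icc yβ (BY - bY + yβ)
  set A := stencilMatrix S (range (bx + 1) ×ˢ range (bY + 1)) (fun p => c p.1 p.2 m)
    fun q p => (q.1 - xβ + p.1, q.2 - yβ + p.2)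
  set known : ℕ → ℕ → ℂ := fun x y => ∑ i ∈ range (bx + 1), ∑ j ∈ range (bY + 1),
    (∑ k ∈ range m, c i j k * u (x + i) (y + j) (z₀ + k)
      + if (x + i, y + j) ∈ S then 0 else c i j m * v (x + i) (y + j))
  have hA : Bijective A.mulVec := by
    refine stencilMatrix_mulVec_bijective (β := (xβ, yβ))
      (by simp only [mem_product, mem_range]; omega) (fun q hq p hp => ?_) hdom
    simp only [S, mem_product, mem_Icc, mem_range] at hq hp
    simp only [Prod.ext_iff]
    omega
  refine (existsUnique_congr fun w => ?_).2
    (hA.existsUnique fun q => g (q.1.1 - xβ) (q.1.2 - yβ) z₀ - known (q.1.1 - xβ) (q.1.2 - yβ))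
  simp only [sum_range_succ_top_layer, sum_add_distrib]
  rw [forall_le_le_iff_forall_mem_Icc_prod, funext_iff, Subtype.forall]
  refine forall₂_congr fun q hq => ?_
  rw [stencilMatrix_mulVec, sum_product, eq_sub_iff_add_eq]
  simp only [known, sum_add_distrib]

/-- The layer-by-layer step of the algorithm determines the interior values of each new
layer uniquely: given the values `u` of the solution on the `m + z₀` previous layers and
boundary values `v` on the boundary strip of layer `m + z₀`, under the strict dominance
condition there is exactly one assignment `w` of values at the interior indices
`I = {(x,y) : xβ ≤ x ≤ Bx − bx + xβ, yβ ≤ y ≤ BY − bY + yβ}` of layer `m + z₀` such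
that the resulting function satisfies the difference equation with right-hand side `g`
at all points `(x, y, z₀)` with `x ≤ Bx − bx`, `y ≤ BY − bY`. -/
theorem layer_step_unique
    (Bx BY bx bY m : ℕ) (hbx : bx < Bx) (hbY : bY < BY) (hm : 1 ≤ m)
    (c : ℕ → ℕ → ℕ → ℂ)
    (xβ yβ : ℕ) (hxβ : xβ ≤ bx) (hyβ : yβ ≤ bY)
    (hc : c xβ yβ m ≠ 0)
    (hdom : ∑ p ∈ ((Finset.range (bx + 1)) ×ˢ (Finset.range (bY + 1))).erase (xβ, yβ),
        ‖c p.1 p.2 m‖ < ‖c xβ yβ m‖)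
    (z₀ : ℕ) (g : ℕ → ℕ → ℕ → ℂ)
    (u : ℕ → ℕ → ℕ → ℂ) (v : ℕ → ℕ → ℂ) :
    ∃! w : (↥((Finset.Icc xβ (Bx - bx + xβ)) ×ˢ (Finset.Icc yβ (BY - bY + yβ)))) → ℂ,
      ∀ x y : ℕ, x ≤ Bx - bx → y ≤ BY - bY →
        ∑ i ∈ Finset.range (bx + 1), ∑ j ∈ Finset.range (bY + 1),
          ∑ k ∈ Finset.range (m + 1),
            c i j k *
              (if z₀ + k < m + z₀ then u (x + i) (y + j) (z₀ + k)
               else if h : (x + i, y + j) ∈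
                   (Finset.Icc xβ (Bx - bx + xβ)) ×ˢ (Finset.Icc yβ (BY - bY + yβ)) then
                 w ⟨(x + i, y + j), h⟩
               else v (x + i) (y + j)) = g x y z₀ :=
  layer_step_unique_general Bx BY bx bY m c xβ yβ hxβ hyβ hdom z₀ g u v
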